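/- Let x be a real number. Then the sequences of right convergents (R_n(ιx))_{n≥0} and of left convergents (L_n(ιx))_{n≥0} of the subtraction continued fraction of x both converge to x. -/

import Mathlib

/-- The remnants r_n(x): r_0(x) = x and r_{k+1}(x) = 1/((⌊r_k(x)⌋ + 1) − r_k(x)). -/
noncomputable def rem (x : ℝ) : ℕ → ℝ
  | 0 => x
  | k + 1 => 1 / (((⌊rem x k⌋ : ℝ) + 1) - rem x k)

/-- The subtraction continued fraction ιx: (ιx)_k = ⌊r_k(x)⌋ + 1, the unique
integer m with 0 < m − r_k(x) ≤ 1. -/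
noncomputable def iota (x : ℝ) (k : ℕ) : ℤ := ⌊rem x k⌋ + 1

/-- The 2×2 integer matrix V(m) = ((m, -1), (1, 0)). -/
def V (m : ℤ) : Matrix (Fin 2) (Fin 2) ℤ := !![m, -1; 1, 0]

/-- The matrix g_{n,s} = V(s 0) · V(s 1) ··· V(s n). -/
def gMat (s : ℕ → ℤ) (n : ℕ) : Matrix (Fin 2) (Fin 2) ℤ :=
  ((List.range (n + 1)).map fun i => V (s i)).prod

/-- The n-th right convergent R_n(s) = a_{n,s} / c_{n,s} as a real number. -/
noncomputable def R (s : ℕ → ℤ) (n : ℕ) : ℝ :=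
  (gMat s n 0 0 : ℝ) / (gMat s n 1 0 : ℝ)

/-- The n-th left convergent L_n(s) = (a_{n,s}+b_{n,s})/(c_{n,s}+d_{n,s}) as a real number. -/
noncomputable def L (s : ℕ → ℤ) (n : ℕ) : ℝ :=
  ((gMat s n 0 0 : ℝ) + (gMat s n 0 1 : ℝ)) / ((gMat s n 1 0 : ℝ) + (gMat s n 1 1 : ℝ))

/-- The n-th accuracy A_n(s) = (c_{n,s}+d_{n,s})·c_{n,s}, an integer. -/
def A (s : ℕ → ℤ) (n : ℕ) : ℤ :=
  (gMat s n 1 0 + gMat s n 1 1) * gMat s n 1 0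


/-!
Writing `g_n = ((a, b), (c, d))` and `r = r_{n+1}(x) ≥ 1`, the recursion of the remnants says
exactly that `x = (a r + b) / (c r + d)`, i.e. `x` is the image of `r` under the Möbius map of
`g_n`. Since `det g_n = 1`, this gives `a/c - x = 1 / (c (c r + d))` and
`x - (a+b)/(c+d) = (r - 1) / ((c + d)(c r + d))`, both in `[0, 1/c]`. All digits after the first
are at least `2`, which forces `c ≥ n + 1` and `c + d ≥ 1`.
-/

lemma gMat_zero (s : ℕ → ℤ) : gMat s 0 = V (s 0) := by
  simp [gMat, List.range_succ]

lemma gMat_succ (s : ℕ → ℤ) (n : ℕ) : gMat s (n + 1) = gMat s n * V (s (n + 1)) := by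
  rw [gMat, List.range_succ, List.map_append, List.prod_append]
  simp [gMat]

lemma mul_V_apply_zero (M : Matrix (Fin 2) (Fin 2) ℤ) (m : ℤ) (i : Fin 2) :
    (M * V m) i 0 = M i 0 * m + M i 1 := by
  simp [V, Matrix.mul_apply, Fin.sum_univ_two]

lemma mul_V_apply_one (M : Matrix (Fin 2) (Fin 2) ℤ) (m : ℤ) (i : Fin 2) :
    (M * V m) i 1 = -M i 0 := by
  simp [V, Matrix.mul_apply, Fin.sum_univ_two]

lemma det_V (m : ℤ) : (V m).det = 1 := by
  simp [V, Matrix.det_fin_two_of]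

lemma det_gMat (s : ℕ → ℤ) (n : ℕ) : (gMat s n).det = 1 := by
  induction n with
  | zero => rw [gMat_zero, det_V]
  | succ n ih => rw [gMat_succ, Matrix.det_mul, ih, det_V, one_mul]

lemma gMat_entry_det (s : ℕ → ℤ) (n : ℕ) :
    gMat s n 0 0 * gMat s n 1 1 - gMat s n 0 1 * gMat s n 1 0 = 1 := by
  rw [← Matrix.det_fin_two, det_gMat]

/-- The hypothesis is `t k = s k - 1 / t (k + 1)` with the denominator cleared. -/
lemma gMat_mobius_of_tails (s : ℕ → ℤ) (t : ℕ → ℝ)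
    (ht : ∀ k, t k * t (k + 1) = s k * t (k + 1) - 1) (n : ℕ) :
    t 0 * (gMat s n 1 0 * t (n + 1) + gMat s n 1 1) =
      gMat s n 0 0 * t (n + 1) + gMat s n 0 1 := by
  induction n with
  | zero =>
    simp only [gMat_zero, V, Matrix.of_apply, Matrix.cons_val', Matrix.cons_val_zero,
      Matrix.cons_val_one, Matrix.empty_val', Matrix.cons_val_fin_one]
    push_cast
    linear_combination ht 0
  | succ n ih =>
    rw [gMat_succ]
    simp only [mul_V_apply_zero, mul_V_apply_one]
    push_cast
    linear_combination t (n + 2) * ih - (t 0 * gMat s n 1 0 - gMat s n 0 0) * ht (n + 1)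

lemma gMat_denom_growth (s : ℕ → ℤ) (hs : ∀ k, 2 ≤ s (k + 1)) (n : ℕ) :
    (n : ℤ) + 1 ≤ gMat s n 1 0 ∧ 1 ≤ gMat s n 1 0 + gMat s n 1 1 := by
  induction n with
  | zero => simp [gMat_zero, V]
  | succ n ih =>
    obtain ⟨hc, hcd⟩ := ih
    have := hs n
    rw [gMat_succ, mul_V_apply_zero, mul_V_apply_one]
    push_cast
    constructor <;> nlinarith

section Mobius

variable {a b c d r x : ℝ}

lemma mobius_right_mem_Icc (hdet : a * d - b * c = 1) (hx : x * (c * r + d) = a * r + b)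
    (hr : 1 ≤ r) (hc : 0 < c) (hcd : 1 ≤ c + d) : a / c ∈ Set.Icc x (x + 1 / c) := by
  have hden : 1 ≤ c * r + d := by nlinarith
  have hdiff : a / c - x = 1 / (c * r + d) / c := by
    field_simp
    linear_combination (-c) * hx + hdet
  have hle : 1 / (c * r + d) ≤ 1 := (div_le_one (by linarith)).mpr hden
  constructor
  · have : 0 ≤ 1 / (c * r + d) / c := by positivity
    linarith
  · have : 1 / (c * r + d) / c ≤ 1 / c := div_le_div_of_nonneg_right hle hc.le
    linarith

lemma mobius_left_mem_Icc (hdet : a * d - b * c = 1) (hx : x * (c * r + d) = a * r + b)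
    (hr : 1 ≤ r) (hc : 0 < c) (hcd : 1 ≤ c + d) :
    (a + b) / (c + d) ∈ Set.Icc (x - 1 / c) x := by
  have hden : 1 ≤ c * r + d := by nlinarith
  have hdiff : x - (a + b) / (c + d) = (r - 1) / (c * r + d) / (c + d) := by
    field_simp
    linear_combination (c + d) * hx + (r - 1) * hdet
  have hnonneg : 0 ≤ (r - 1) / (c * r + d) := div_nonneg (by linarith) (by linarith)
  have hle : (r - 1) / (c * r + d) ≤ 1 / c := by
    rw [div_le_div_iff₀ (by linarith) hc]
    nlinarith
  constructor
  · have : (r - 1) / (c * r + d) / (c + d) ≤ (r - 1) / (c * r + d) := div_le_self hnonneg hcd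
    linarith
  · have : 0 ≤ (r - 1) / (c * r + d) / (c + d) := div_nonneg hnonneg (by linarith)
    linarith

end Mobius

lemma iota_sub_rem_pos (x : ℝ) (k : ℕ) : 0 < (iota x k : ℝ) - rem x k := by
  have := Int.lt_floor_add_one (rem x k)
  push_cast [iota]
  linarith

lemma iota_sub_rem_le_one (x : ℝ) (k : ℕ) : (iota x k : ℝ) - rem x k ≤ 1 := by
  have := Int.floor_le (rem x k)
  push_cast [iota]
  linarith

lemma rem_succ (x : ℝ) (k : ℕ) : rem x (k + 1) = 1 / ((iota x k : ℝ) - rem x k) := by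
  simp [rem, iota]

lemma one_le_rem_succ (x : ℝ) (k : ℕ) : 1 ≤ rem x (k + 1) := by
  rw [rem_succ]
  exact one_le_one_div (iota_sub_rem_pos x k) (iota_sub_rem_le_one x k)

lemma two_le_iota_succ (x : ℝ) (k : ℕ) : 2 ≤ iota x (k + 1) := by
  have : (1 : ℤ) ≤ ⌊rem x (k + 1)⌋ := Int.le_floor.mpr (by exact_mod_cast one_le_rem_succ x k)
  rw [iota]
  omega

lemma rem_mul_rem_succ (x : ℝ) (k : ℕ) :
    rem x k * rem x (k + 1) = iota x k * rem x (k + 1) - 1 := by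
  have := (iota_sub_rem_pos x k).ne'
  rw [rem_succ]
  field_simp
  ring

lemma R_iota_mem_Icc (x : ℝ) (n : ℕ) : R (iota x) n ∈ Set.Icc x (x + 1 / ((n : ℝ) + 1)) := by
  obtain ⟨hc, hcd⟩ := gMat_denom_growth (iota x) (two_le_iota_succ x) n
  have hcR : (n : ℝ) + 1 ≤ gMat (iota x) n 1 0 := by exact_mod_cast hc
  obtain ⟨hlow, hhigh⟩ := mobius_right_mem_Icc (x := x)
    (by exact_mod_cast gMat_entry_det (iota x) n)
    (gMat_mobius_of_tails (iota x) (rem x) (rem_mul_rem_succ x) n) (one_le_rem_succ x n)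
    (by linarith) (by exact_mod_cast hcd)
  exact ⟨hlow, hhigh.trans (by gcongr)⟩

lemma L_iota_mem_Icc (x : ℝ) (n : ℕ) : L (iota x) n ∈ Set.Icc (x - 1 / ((n : ℝ) + 1)) x := by
  obtain ⟨hc, hcd⟩ := gMat_denom_growth (iota x) (two_le_iota_succ x) n
  have hcR : (n : ℝ) + 1 ≤ gMat (iota x) n 1 0 := by exact_mod_cast hc
  obtain ⟨hlow, hhigh⟩ := mobius_left_mem_Icc (x := x)
    (by exact_mod_cast gMat_entry_det (iota x) n)
    (gMat_mobius_of_tails (iota x) (rem x) (rem_mul_rem_succ x) n) (one_le_rem_succ x n)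
    (by linarith) (by exact_mod_cast hcd)
  exact ⟨(by gcongr : x - 1 / ((n : ℝ) + 1) ≤ _).trans hlow, hhigh⟩

/-- For any real x, the sequences of right and left convergents of
the subtraction continued fraction of x both converge to x. -/
theorem stmt_13 (x : ℝ) :
    Filter.Tendsto (fun n : ℕ => R (iota x) n) Filter.atTop (nhds x) ∧
    Filter.Tendsto (fun n : ℕ => L (iota x) n) Filter.atTop (nhds x) := by
  have hlim : Filter.Tendsto (fun n : ℕ => 1 / ((n : ℝ) + 1)) Filter.atTop (nhds 0) :=
    tendsto_one_div_add_atTop_nhds_zero_nat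
  constructor
  · refine tendsto_of_tendsto_of_tendsto_of_le_of_le tendsto_const_nhds ?_
      (fun n => (R_iota_mem_Icc x n).1) (fun n => (R_iota_mem_Icc x n).2)
    simpa using hlim.const_add x
  · refine tendsto_of_tendsto_of_tendsto_of_le_of_le ?_ tendsto_const_nhds
      (fun n => (L_iota_mem_Icc x n).1) (fun n => (L_iota_mem_Icc x n).2)
    simpa using hlim.const_sub x
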